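/- Let X be a compact, bounded turning metric space, Y a metric space, f : X → Y a non-constant branched quasisymmetry, and d_f the pullback metric on X. Then: (i) f : (X,d_f) → Y is 1-Lipschitz; (ii) diam(f(J)) = diam_f(J) for every continuum J in (X,d_f), where diam_f denotes diameter with respect to d_f; and (iii) the metric space (X,d_f) is 1-bounded turning. -/

import Mathlib

/-!
Parts (i) and (ii) need only the continuity of `f`: a continuum `K` through `x` and `y` gives
`dist (f x) (f y) ≤ diam (f '' K)`, and a continuum `J` joins any two of its own points, so
`d_f ≤ diam (f '' J)` on `J`. Part (iii) then follows once the infimum defining `d_f x y` is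
attained, by a continuum `K` with `diam_f K = diam (f '' K) = d_f x y`. It is attained because the
continua through `x` and `y` form a closed, hence compact, subset of the hyperspace of `X` (Vietoris
topology, which is that of the Hausdorff metric), on which `K ↦ diam (f '' K)` is continuous.
-/

open Metric Set
open scoped ENNReal NNReal

/-- A continuum: a nonempty compact connected set. -/
def IsContinuum {X : Type*} [TopologicalSpace X] (K : Set X) : Prop :=
  IsCompact K ∧ IsConnected K

/-- `X` is `C`-bounded turning: every pair of points lies in a continuum of
diameter at most `C` times their distance. -/
def BoundedTurningWith (X : Type*) [PseudoMetricSpace X] (C : ℝ) : Prop :=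
  ∀ x y : X, ∃ K : Set X, IsContinuum K ∧ x ∈ K ∧ y ∈ K ∧ Metric.diam K ≤ C * dist x y

/-- `η` is a (necessarily increasing) homeomorphism of `[0,∞)` onto itself. -/
def IsQSControl (η : ℝ → ℝ) : Prop :=
  ContinuousOn η (Set.Ici 0) ∧ StrictMonoOn η (Set.Ici 0) ∧
    Set.MapsTo η (Set.Ici 0) (Set.Ici 0) ∧ Set.SurjOn η (Set.Ici 0) (Set.Ici 0)

/-- `f` is a branched quasisymmetry with control homeomorphism `η`:
`f` is continuous and distorts ratios of diameters of intersecting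
non-trivial continua in a manner controlled by `η`. -/
def BranchedQS {X Y : Type*} [PseudoMetricSpace X] [PseudoMetricSpace Y]
    (η : ℝ → ℝ) (f : X → Y) : Prop :=
  Continuous f ∧ IsQSControl η ∧
    ∀ E E' : Set X, IsContinuum E → IsContinuum E' → E.Nontrivial → E'.Nontrivial →
      (E ∩ E').Nonempty →
        Metric.diam (f '' E) ≤ η (Metric.diam E / Metric.diam E') * Metric.diam (f '' E')

/-- The Guo–Williams pullback distance associated to `f`:
`d_f(x,y) = inf {diam (f '' K) : K a continuum containing x and y}`. -/
noncomputable def pullbackDist {X Y : Type*} [TopologicalSpace X] [PseudoMetricSpace Y]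
    (f : X → Y) (x y : X) : ℝ :=
  sInf {t : ℝ | ∃ K : Set X, IsContinuum K ∧ x ∈ K ∧ y ∈ K ∧ t = Metric.diam (f '' K)}

/-- Diameter of a set with respect to the pullback distance. -/
noncomputable def pullbackDiam {X Y : Type*} [TopologicalSpace X] [PseudoMetricSpace Y]
    (f : X → Y) (S : Set X) : ℝ :=
  sSup {t : ℝ | ∃ p ∈ S, ∃ q ∈ S, t = pullbackDist f p q}

namespace Metric

variable {α : Type*} [MetricSpace α]

theorem diam_le_diam_add_two_mul_hausdorffDist {s t : Set α} (ht : IsCompact t)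
    (htne : t.Nonempty) (fin : hausdorffEDist s t ≠ ⊤) :
    diam s ≤ diam t + 2 * hausdorffDist s t := by
  refine diam_le_of_forall_dist_le
    (add_nonneg diam_nonneg (mul_nonneg zero_le_two hausdorffDist_nonneg)) fun p hp q hq => ?_
  obtain ⟨p', hp', hpp'⟩ := ht.exists_infDist_eq_dist htne p
  have hp_t := infDist_le_hausdorffDist_of_mem hp fin
  have hq_t := infDist_le_hausdorffDist_of_mem hq fin
  calc dist p q ≤ dist p p' + dist q p' := dist_triangle_right p q p'
    _ ≤ infDist p t + (infDist q t + diam t) := by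
        rw [← hpp']
        gcongr
        exact dist_le_infDist_add_diam ht.isBounded hp'
    _ ≤ diam t + 2 * hausdorffDist s t := by linarith

theorem NonemptyCompacts.lipschitzWith_diam :
    LipschitzWith 2 fun K : TopologicalSpace.NonemptyCompacts α => diam (K : Set α) :=
  LipschitzWith.of_le_add_mul 2 fun K L => by
    simpa only [NonemptyCompacts.dist_eq, NNReal.coe_ofNat] using
      diam_le_diam_add_two_mul_hausdorffDist L.isCompact L.nonempty (edist_ne_top K L)

end Metric

namespace TopologicalSpace.NonemptyCompacts

variable {α : Type*} [TopologicalSpace α]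

theorem isClosed_setOf_mem [T1Space α] (x : α) :
    IsClosed {K : NonemptyCompacts α | x ∈ K} := by
  simpa only [inter_singleton_nonempty, SetLike.mem_coe] using
    isClosed_inter_nonempty_of_isClosed (isClosed_singleton (x := x))

/-- A compact set that falls apart does so along two disjoint compact pieces, which a Hausdorff
space separates by disjoint open sets `U`, `V`; every compact set close to it in the Vietoris
topology lies in `U ∪ V` and meets both. -/
theorem isClosed_setOf_isPreconnected [T2Space α] :
    IsClosed {K : NonemptyCompacts α | IsPreconnected (K : Set α)} := by
  refine isOpen_compl_iff.mp (isOpen_iff_forall_mem_open.mpr fun K hK => ?_)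
  obtain ⟨u, v, hu, hv, hKuv, huv, hKu, hKv⟩ : ∃ u v, IsClosed u ∧ IsClosed v ∧
      (K : Set α) ⊆ u ∪ v ∧ Disjoint u v ∧ ¬(K : Set α) ⊆ u ∧ ¬(K : Set α) ⊆ v := by
    simpa [isPreconnected_iff_subset_of_fully_disjoint_closed K.isCompact.isClosed] using hK
  obtain ⟨U, V, hU, hV, huU, hvV, hUV⟩ :=
    SeparatedNhds.of_isCompact_isCompact (K.isCompact.inter_right hu)
      (K.isCompact.inter_right hv) (huv.mono inter_subset_right inter_subset_right)
  refine ⟨{L | (L : Set α) ⊆ U ∪ V} ∩ {L | ((L : Set α) ∩ U).Nonempty} ∩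
      {L | ((L : Set α) ∩ V).Nonempty}, ?_, ?_, ?_⟩
  · rintro L ⟨⟨hLUV, hLU⟩, hLV⟩ hL
    obtain ⟨z, -, hzU, hzV⟩ := hL U V hU hV hLUV hLU hLV
    exact hUV.le_bot ⟨hzU, hzV⟩
  · exact ((isOpen_subsets_of_isOpen (hU.union hV)).inter (isOpen_inter_nonempty_of_isOpen hU)).inter
      (isOpen_inter_nonempty_of_isOpen hV)
  · obtain ⟨a, haK, hav⟩ := not_subset.mp hKv
    obtain ⟨b, hbK, hbu⟩ := not_subset.mp hKu
    have hau : a ∈ u := (hKuv haK).resolve_right hav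
    have hbv : b ∈ v := (hKuv hbK).resolve_left hbu
    refine ⟨⟨fun z hz => ?_, a, haK, huU ⟨haK, hau⟩⟩, b, hbK, hvV ⟨hbK, hbv⟩⟩
    exact (hKuv hz).imp (fun hzu => huU ⟨hz, hzu⟩) fun hzv => hvV ⟨hz, hzv⟩

end TopologicalSpace.NonemptyCompacts

theorem BoundedTurningWith.exists_isContinuum {X : Type*} [PseudoMetricSpace X] {C : ℝ}
    (h : BoundedTurningWith X C) (x y : X) : ∃ K : Set X, IsContinuum K ∧ x ∈ K ∧ y ∈ K :=
  let ⟨K, hK, hx, hy, _⟩ := h x y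
  ⟨K, hK, hx, hy⟩

section PullbackDist

variable {X Y : Type*} [TopologicalSpace X] [PseudoMetricSpace Y] {f : X → Y}

theorem pullbackDist_le_diam_image {K : Set X} (hK : IsContinuum K) {x y : X}
    (hx : x ∈ K) (hy : y ∈ K) : pullbackDist f x y ≤ diam (f '' K) :=
  csInf_le ⟨0, by rintro t ⟨L, -, -, -, rfl⟩; exact diam_nonneg⟩ ⟨K, hK, hx, hy, rfl⟩

theorem dist_le_pullbackDist (hf : Continuous f) {x y : X}
    (hxy : ∃ K : Set X, IsContinuum K ∧ x ∈ K ∧ y ∈ K) :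
    dist (f x) (f y) ≤ pullbackDist f x y := by
  obtain ⟨K₀, hK₀, hx₀, hy₀⟩ := hxy
  refine le_csInf ⟨_, K₀, hK₀, hx₀, hy₀, rfl⟩ ?_
  rintro t ⟨K, hK, hx, hy, rfl⟩
  exact dist_le_diam_of_mem (hK.1.image hf).isBounded (mem_image_of_mem f hx)
    (mem_image_of_mem f hy)

theorem pullbackDiam_le_diam_image {K : Set X} (hK : IsContinuum K) :
    pullbackDiam f K ≤ diam (f '' K) := by
  obtain ⟨x, hx⟩ := hK.2.nonempty
  refine csSup_le ⟨_, x, hx, x, hx, rfl⟩ ?_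
  rintro t ⟨p, hp, q, hq, rfl⟩
  exact pullbackDist_le_diam_image hK hp hq

theorem diam_image_le_pullbackDiam (hf : Continuous f) {K : Set X} (hK : IsContinuum K) :
    diam (f '' K) ≤ pullbackDiam f K := by
  obtain ⟨x, hx⟩ := hK.2.nonempty
  have hbdd : BddAbove {t : ℝ | ∃ p ∈ K, ∃ q ∈ K, t = pullbackDist f p q} :=
    ⟨diam (f '' K), by rintro t ⟨p, hp, q, hq, rfl⟩; exact pullbackDist_le_diam_image hK hp hq⟩
  have hle : ∀ p ∈ K, ∀ q ∈ K, dist (f p) (f q) ≤ pullbackDiam f K := fun p hp q hq =>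
    (dist_le_pullbackDist hf ⟨K, hK, hp, hq⟩).trans (le_csSup hbdd ⟨p, hp, q, hq, rfl⟩)
  refine diam_le_of_forall_dist_le (dist_nonneg.trans (hle x hx x hx)) ?_
  rintro _ ⟨p, hp, rfl⟩ _ ⟨q, hq, rfl⟩
  exact hle p hp q hq

theorem diam_image_eq_pullbackDiam (hf : Continuous f) {K : Set X} (hK : IsContinuum K) :
    diam (f '' K) = pullbackDiam f K :=
  (diam_image_le_pullbackDiam hf hK).antisymm (pullbackDiam_le_diam_image hK)

end PullbackDist

open TopologicalSpace in
theorem exists_isContinuum_diam_image_le_pullbackDist {X Y : Type*} [TopologicalSpace X]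
    [T2Space X] [CompactSpace X] [MetricSpace Y] {f : X → Y} (hf : Continuous f) {x y : X}
    (hxy : ∃ K : Set X, IsContinuum K ∧ x ∈ K ∧ y ∈ K) :
    ∃ K : Set X, IsContinuum K ∧ x ∈ K ∧ y ∈ K ∧ diam (f '' K) ≤ pullbackDist f x y := by
  set S := {K : NonemptyCompacts X | IsPreconnected (K : Set X)} ∩
    {K | x ∈ K} ∩ {K | y ∈ K}
  have hS : IsCompact S :=
    ((NonemptyCompacts.isClosed_setOf_isPreconnected.inter
      (NonemptyCompacts.isClosed_setOf_mem x)).inter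
      (NonemptyCompacts.isClosed_setOf_mem y)).isCompact
  have hcont : Continuous fun K : NonemptyCompacts X => diam (f '' K) :=
    Metric.NonemptyCompacts.lipschitzWith_diam.continuous.comp hf.nonemptyCompacts_map
  obtain ⟨K₀, hK₀, hx₀, hy₀⟩ := hxy
  obtain ⟨K, ⟨⟨hK, hx⟩, hy⟩, hmin⟩ :=
    hS.exists_isMinOn ⟨⟨⟨K₀, hK₀.1⟩, hK₀.2.nonempty⟩, ⟨hK₀.2.2, hx₀⟩, hy₀⟩ hcont.continuousOn
  refine ⟨K, ⟨K.isCompact, K.nonempty, hK⟩, hx, hy, le_csInf ⟨_, K₀, hK₀, hx₀, hy₀, rfl⟩ ?_⟩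
  rintro t ⟨L, hL, hxL, hyL, rfl⟩
  exact hmin (a := ⟨⟨L, hL.1⟩, hL.2.nonempty⟩) ⟨⟨hL.2.2, hxL⟩, hyL⟩

theorem pullbackDist_factorization_general {X Y : Type*} [MetricSpace X] [CompactSpace X]
    [MetricSpace Y] (C : ℝ) (hbt : BoundedTurningWith X C)
    (η : ℝ → ℝ) (f : X → Y) (hf : BranchedQS η f) :
    (∀ x y : X, dist (f x) (f y) ≤ pullbackDist f x y) ∧
      (∀ J : Set X, IsContinuum J → Metric.diam (f '' J) = pullbackDiam f J) ∧
      ∀ x y : X, ∃ K : Set X, IsContinuum K ∧ x ∈ K ∧ y ∈ K ∧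
        pullbackDiam f K ≤ 1 * pullbackDist f x y := by
  have hfc : Continuous f := hf.1
  refine ⟨fun x y => dist_le_pullbackDist hfc (hbt.exists_isContinuum x y),
    fun J hJ => diam_image_eq_pullbackDiam hfc hJ, fun x y => ?_⟩
  obtain ⟨K, hK, hx, hy, hmin⟩ :=
    exists_isContinuum_diam_image_le_pullbackDist hfc (hbt.exists_isContinuum x y)
  exact ⟨K, hK, hx, hy, by rwa [one_mul, ← diam_image_eq_pullbackDiam hfc hK]⟩

/-- For a non-constant branched quasisymmetry `f` on a compact bounded turning space:
(i) `f : (X, d_f) → Y` is `1`-Lipschitz; (ii) `f` preserves the `d_f`-diameter of continua;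
(iii) `(X, d_f)` is bounded turning with constant `1`. -/
theorem pullbackDist_factorization {X Y : Type*} [MetricSpace X] [CompactSpace X]
    [MetricSpace Y] (C : ℝ) (hC : 1 ≤ C) (hbt : BoundedTurningWith X C)
    (η : ℝ → ℝ) (f : X → Y) (hf : BranchedQS η f) (hnc : ∃ p q : X, f p ≠ f q) :
    (∀ x y : X, dist (f x) (f y) ≤ pullbackDist f x y) ∧
      (∀ J : Set X, IsContinuum J → Metric.diam (f '' J) = pullbackDiam f J) ∧
      ∀ x y : X, ∃ K : Set X, IsContinuum K ∧ x ∈ K ∧ y ∈ K ∧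
        pullbackDiam f K ≤ 1 * pullbackDist f x y :=
  pullbackDist_factorization_general C hbt η f hf
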